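/- (Refined shuffle theorem) Let σ = σ_1⋯σ_m and π = π_1⋯π_n be disjoint words with distinct positive integer entries such that σ_m < π_n. Let Sh^{sb}(σ,π) be the set of shuffles α of σ and π whose last letter is σ_m. Then Σ_{α ∈ Sh^{sb}(σ,π)} q^{maj(α)} = q^{maj(σ)+maj(π)+n} · C(m+n-1, n)_q. -/

import Mathlib

/-!
Encode a shuffle by the set of positions carrying the letters of the first word. Deleting the
last letter `u_a` of a shuffle that ends in it leaves a shuffle ending either in `u_{a-1}` or in
`v_b`, and the descent at the penultimate position `a + b - 1` is present iff `u_a` is smaller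
than that letter. So the generating function `F(a, b; u, v)` of `q^maj` over the shuffles ending
in the first word satisfies
`F(a, b; u, v) = q^{[u_a < u_{a-1}](a+b-1)} F(a-1, b; u, v) + q^{[u_a < v_b](a+b-1)} F(b, a-1; v, u)`.
When no letter of `u` equals a letter of `v`, the closed form
`q^{maj u + maj v + [u_a < v_b] b} [a-1+b choose b]_q` satisfies the same recursion by the two
`q`-Pascal rules, and the theorem is its case `u_a < v_b`.
-/

open Finset

/-- The major index of a word `w = w_1⋯w_N` with distinct entries:
`maj(w) = ∑_{i : w_i > w_{i+1}} i`. -/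
def majW {N : ℕ} (w : Fin N → ℕ) : ℕ :=
  ∑ i : Fin N, if h : i.1 + 1 < N then
    (if w ⟨i.1 + 1, h⟩ < w i then i.1 + 1 else 0) else 0

/-- The shuffle of the words `σ` (of length `m`) and `π` (of length `n`) determined by
the set `s` of positions receiving the letters of `σ` (in order); the complement of `s`
receives the letters of `π` (in order).  (Junk values are used if `s.card ≠ m`.) -/
def shuffleWord {m n : ℕ} (σ : Fin m → ℕ) (π : Fin n → ℕ)
    (s : Finset (Fin (m + n))) : Fin (m + n) → ℕ := fun i =>
  if i ∈ s then
    (if h : (s.filter fun j => j < i).card < m then σ ⟨_, h⟩ else 0)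
  else
    (if h : ((sᶜ).filter fun j => j < i).card < n then π ⟨_, h⟩ else 0)

/-- The `q`-factorial `[n]_q!`. -/
def qfac {K : Type*} [CommSemiring K] (q : K) (n : ℕ) : K :=
  ∏ i ∈ Finset.range n, ∑ j ∈ Finset.range (i + 1), q ^ j

local notation "q" => (RatFunc.X : RatFunc ℚ)

noncomputable def qint (k : ℕ) : RatFunc ℚ := ∑ j ∈ range k, q ^ j

lemma qfac_succ (k : ℕ) : qfac q (k + 1) = qfac q k * qint (k + 1) := by
  simp [qfac, qint, prod_range_succ]

lemma qint_ne_zero {k : ℕ} (hk : 0 < k) : qint k ≠ 0 := by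
  have hpoly :
      qint k = algebraMap (Polynomial ℚ) (RatFunc ℚ) (∑ j ∈ range k, Polynomial.X ^ j) := by
    simp [qint, map_sum, RatFunc.algebraMap_X]
  rw [hpoly]
  refine RatFunc.algebraMap_ne_zero fun h => ?_
  have := congrArg (Polynomial.eval 1) h
  simp [Polynomial.eval_finsetSum] at this
  omega

lemma qfac_ne_zero (k : ℕ) : qfac q k ≠ 0 := by
  induction k with
  | zero => simp [qfac]
  | succ k ih => rw [qfac_succ]; exact mul_ne_zero ih (qint_ne_zero k.succ_pos)

lemma qint_add (a b : ℕ) : qint (a + b) = qint b + q ^ b * qint a := by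
  simp only [qint, add_comm a b, sum_range_add, mul_sum, pow_add]

noncomputable def qbinom (a b : ℕ) : RatFunc ℚ := qfac q (a + b) / (qfac q a * qfac q b)

lemma qbinom_comm (a b : ℕ) : qbinom a b = qbinom b a := by
  rw [qbinom, qbinom, add_comm, mul_comm]

lemma qbinom_zero_left (b : ℕ) : qbinom 0 b = 1 := by
  rw [qbinom, zero_add, show qfac q 0 = 1 from prod_range_zero _, one_mul,
    div_self (qfac_ne_zero b)]

lemma qbinom_succ_succ (a b : ℕ) :
    qbinom (a + 1) (b + 1) = qbinom (a + 1) b + q ^ (b + 1) * qbinom a (b + 1) := by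
  have hsplit := qint_add (a + 1) (b + 1)
  have hN : a + 1 + (b + 1) = a + (b + 1) + 1 := by ring
  rw [hN] at hsplit
  rw [qbinom, qbinom, qbinom, hN, show a + 1 + b = a + (b + 1) by ring, qfac_succ, qfac_succ a,
    qfac_succ b, hsplit]
  have := qint_ne_zero a.succ_pos
  have := qint_ne_zero b.succ_pos
  field_simp [qfac_ne_zero]

lemma qbinom_succ_succ' (a b : ℕ) :
    qbinom (a + 1) (b + 1) = q ^ (a + 1) * qbinom (a + 1) b + qbinom a (b + 1) := by
  rw [qbinom_comm, qbinom_succ_succ, qbinom_comm b, qbinom_comm (b + 1), add_comm]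

/-- The inductive step of the closed form, for `a + 2` letters of `u` against `b + 1` letters of
`v`: `x = u_{a+1}` and `y = u_{a+2}` are the last two letters of `u`, and `z = v_{b+1}`. -/
lemma qbinom_succ_succ_weighted (a b : ℕ) {x y z : ℕ} (hxz : x ≠ z) :
    q ^ ((if y < x then a + 1 + (b + 1) else 0) + if x < z then b + 1 else 0) * qbinom a (b + 1)
      + q ^ ((if y < z then a + 1 + (b + 1) else 0) + if z < x then a + 1 else 0) * qbinom (a + 1) b
      = q ^ ((if y < x then a + 1 else 0) + if y < z then b + 1 else 0)
          * qbinom (a + 1) (b + 1) := by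
  split_ifs <;> first
    | omega
    | (rw [qbinom_succ_succ]; ring1)
    | (rw [qbinom_succ_succ']; ring1)

-- `ℕ`-indexed versions of `majW` and `shuffleWord`, so that the induction can change the
-- lengths of the words.
def majNat (N : ℕ) (w : ℕ → ℕ) : ℕ :=
  ∑ i ∈ range (N - 1), if w (i + 1) < w i then i + 1 else 0

lemma majNat_congr {N : ℕ} {w w' : ℕ → ℕ} (h : ∀ i < N, w i = w' i) :
    majNat N w = majNat N w' :=
  sum_congr rfl fun i hi => by
    rw [mem_range] at hi
    rw [h i (by omega), h (i + 1) (by omega)]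

lemma majNat_succ {N : ℕ} (hN : 0 < N) (w : ℕ → ℕ) :
    majNat (N + 1) w = majNat N w + if w N < w (N - 1) then N else 0 := by
  obtain ⟨K, rfl⟩ := Nat.exists_eq_add_of_lt hN
  simp [majNat, sum_range_succ]

def shuffleNat (u v : ℕ → ℕ) (s : Finset ℕ) (i : ℕ) : ℕ :=
  if i ∈ s then u #{j ∈ s | j < i} else v (i - #{j ∈ s | j < i})

section shuffleNat

variable (u v : ℕ → ℕ)

lemma shuffleNat_insert_of_lt {L i : ℕ} (s : Finset ℕ) (hi : i < L) :
    shuffleNat u v (insert L s) i = shuffleNat u v s i := by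
  simp [shuffleNat, filter_insert, hi.ne, hi.not_gt]

lemma shuffleNat_insert_self {L : ℕ} {s : Finset ℕ} (hs : s ⊆ range L) :
    shuffleNat u v (insert L s) L = u #s := by
  have : {j ∈ insert L s | j < L} = s := by
    rw [filter_insert, if_neg (lt_irrefl L)]
    exact filter_true_of_mem fun j hj => mem_range.mp (hs hj)
  rw [shuffleNat, if_pos (mem_insert_self L s), this]

lemma shuffleNat_last_of_mem {L : ℕ} {s : Finset ℕ} (hs : s ⊆ range (L + 1)) (hL : L ∈ s) :
    shuffleNat u v s L = u (#s - 1) := by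
  have herase : s.erase L ⊆ range L := fun j hj => by
    obtain ⟨hjL, hj⟩ := mem_erase.mp hj
    have := mem_range.mp (hs hj)
    exact mem_range.mpr (by omega)
  conv_lhs => rw [← insert_erase hL]
  rw [shuffleNat_insert_self u v herase, card_erase_of_mem hL]

lemma shuffleNat_of_subset_range {L : ℕ} {s : Finset ℕ} (hs : s ⊆ range L) :
    shuffleNat u v s L = v (L - #s) := by
  have hL : L ∉ s := fun h => lt_irrefl L (mem_range.mp (hs h))
  rw [shuffleNat, if_neg hL, filter_true_of_mem fun j hj => mem_range.mp (hs hj)]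

lemma card_filter_lt_le (s : Finset ℕ) (i : ℕ) : #{j ∈ s | j < i} ≤ i := by
  simpa using card_le_card (s := {j ∈ s | j < i}) (t := range i)
    fun j hj => mem_range.mpr (mem_filter.mp hj).2

lemma shuffleNat_sdiff {M i : ℕ} (t : Finset ℕ) (hi : i < M) :
    shuffleNat u v t i = shuffleNat v u (range M \ t) i := by
  have hcard : #{j ∈ range M \ t | j < i} = i - #{j ∈ t | j < i} := by
    have hcompl : {j ∈ range M \ t | j < i} = {j ∈ range i | j ∉ t} := by
      ext j
      simp only [mem_filter, mem_sdiff, mem_range]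
      exact ⟨fun ⟨⟨_, hj⟩, hji⟩ => ⟨hji, hj⟩,
        fun ⟨hji, hj⟩ => ⟨⟨by omega, hj⟩, hji⟩⟩
    have hin : {j ∈ t | j < i} = {j ∈ range i | j ∈ t} := by
      ext j; simp only [mem_filter, mem_range, and_comm]
    have hsplit := card_filter_add_card_filter_not (s := range i) (· ∈ t)
    rw [card_range] at hsplit
    rw [hcompl, hin]
    omega
  by_cases h : i ∈ t
  · rw [shuffleNat, shuffleNat, if_pos h, if_neg (by simp [h]), hcard,
      Nat.sub_sub_self (card_filter_lt_le t i)]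
  · rw [shuffleNat, shuffleNat, if_neg h, if_pos (by simp [h, hi]), hcard]

end shuffleNat

def lastLeftShuffles (a b : ℕ) : Finset (Finset ℕ) :=
  {s ∈ (range (a + b)).powersetCard a | a + b - 1 ∈ s}

lemma mem_lastLeftShuffles {a b : ℕ} {s : Finset ℕ} :
    s ∈ lastLeftShuffles a b ↔ (s ⊆ range (a + b) ∧ #s = a) ∧ a + b - 1 ∈ s := by
  rw [lastLeftShuffles, mem_filter, mem_powersetCard]

lemma lastLeftShuffles_succ_left (a b : ℕ) :
    lastLeftShuffles (a + 1) b = ((range (a + b)).powersetCard a).image (insert (a + b)) := by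
  have hL : a + b ∉ range (a + b) := notMem_range_self
  rw [lastLeftShuffles, show a + 1 + b = a + b + 1 by ring, range_add_one,
    powersetCard_succ_insert hL, filter_union, Nat.add_sub_cancel]
  have hlow : {s ∈ (range (a + b)).powersetCard (a + 1) | a + b ∈ s} = ∅ :=
    filter_false_of_mem fun s hs h => hL ((mem_powersetCard.mp hs).1 h)
  rw [hlow, empty_union]
  exact filter_true_of_mem fun s hs => by
    obtain ⟨t, -, rfl⟩ := mem_image.mp hs
    exact mem_insert_self _ _

lemma lastLeftShuffles_zero_left (b : ℕ) : lastLeftShuffles 0 b = ∅ :=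
  filter_false_of_mem fun s hs h => by
    rw [card_eq_zero.mp (mem_powersetCard.mp hs).2] at h
    exact notMem_empty _ h

lemma lastLeftShuffles_zero_right {a : ℕ} (ha : 0 < a) : lastLeftShuffles a 0 = {range a} := by
  rw [lastLeftShuffles, add_zero,
    show powersetCard a (range a) = {range a} by simpa using powersetCard_self (range a),
    filter_singleton, if_pos (mem_range.mpr (by omega))]

lemma sum_powersetCard_filter_notMem {M : Type*} [AddCommMonoid M] {a b : ℕ}
    (hab : 0 < a + b) (f : Finset ℕ → M) :
    ∑ t ∈ (range (a + b)).powersetCard a with a + b - 1 ∉ t, f t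
      = ∑ t ∈ lastLeftShuffles b a, f (range (a + b) \ t) := by
  have hL : a + b - 1 ∈ range (a + b) := mem_range.mpr (by omega)
  have hcompl : ∀ t ⊆ range (a + b), #(range (a + b) \ t) = a + b - #t := fun t ht => by
    rw [card_sdiff_of_subset ht, card_range]
  refine sum_nbij' (range (a + b) \ ·) (range (a + b) \ ·) ?_ ?_ ?_ ?_ ?_
  · intro t ht
    rw [mem_filter, mem_powersetCard] at ht
    rw [mem_lastLeftShuffles, add_comm b a, mem_sdiff, hcompl t ht.1.1]
    exact ⟨⟨sdiff_subset, by omega⟩, hL, ht.2⟩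
  · intro t ht
    rw [mem_lastLeftShuffles, add_comm b a] at ht
    rw [mem_filter, mem_powersetCard, mem_sdiff, hcompl t ht.1.1, not_and, not_not]
    exact ⟨⟨sdiff_subset, by omega⟩, fun _ => ht.2⟩
  · intro t ht
    exact Finset.sdiff_sdiff_eq_self (mem_powersetCard.mp (mem_filter.mp ht).1).1
  · intro t ht
    rw [mem_lastLeftShuffles, add_comm b a] at ht
    exact Finset.sdiff_sdiff_eq_self ht.1.1
  · intro t ht
    rw [Finset.sdiff_sdiff_eq_self (mem_powersetCard.mp (mem_filter.mp ht).1).1]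

noncomputable def lastLeftMajSum (a b : ℕ) (u v : ℕ → ℕ) : RatFunc ℚ :=
  ∑ s ∈ lastLeftShuffles a b, q ^ majNat (a + b) (shuffleNat u v s)

section lastLeftMajSum

variable (u v : ℕ → ℕ)

lemma lastLeftMajSum_zero_left (b : ℕ) : lastLeftMajSum 0 b u v = 0 := by
  rw [lastLeftMajSum, lastLeftShuffles_zero_left, sum_empty]

lemma lastLeftMajSum_zero_right {a : ℕ} (ha : 0 < a) :
    lastLeftMajSum a 0 u v = q ^ majNat a u := by
  rw [lastLeftMajSum, lastLeftShuffles_zero_right ha, sum_singleton, add_zero]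
  refine congrArg _ (majNat_congr fun i hi => ?_)
  have hprefix : {j ∈ range a | j < i} = range i := by
    ext j
    simp only [mem_filter, mem_range]
    omega
  rw [shuffleNat, if_pos (mem_range.mpr hi), hprefix, card_range]

lemma lastLeftMajSum_succ_left {a b : ℕ} (hab : 0 < a + b) :
    lastLeftMajSum (a + 1) b u v
      = q ^ (if u a < u (a - 1) then a + b else 0) * lastLeftMajSum a b u v
        + q ^ (if u a < v (b - 1) then a + b else 0) * lastLeftMajSum b a v u := by
  have hpeel : ∀ t ∈ (range (a + b)).powersetCard a,
      majNat (a + 1 + b) (shuffleNat u v (insert (a + b) t))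
        = majNat (a + b) (shuffleNat u v t)
          + if u a < shuffleNat u v t (a + b - 1) then a + b else 0 := by
    intro t ht
    obtain ⟨hsub, hcard⟩ := mem_powersetCard.mp ht
    rw [show a + 1 + b = a + b + 1 by omega, majNat_succ hab, shuffleNat_insert_self u v hsub,
      hcard, shuffleNat_insert_of_lt u v t (by omega : a + b - 1 < a + b),
      majNat_congr fun i hi => shuffleNat_insert_of_lt u v t hi]
  have hinj : Set.InjOn (insert (a + b)) ((range (a + b)).powersetCard a : Set (Finset ℕ)) := by
    have hnot : ∀ t ∈ (range (a + b)).powersetCard a, a + b ∉ t := fun t ht h =>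
      notMem_range_self ((mem_powersetCard.mp ht).1 h)
    intro t₁ ht₁ t₂ ht₂ h
    rw [← erase_insert (hnot t₁ ht₁), h, erase_insert (hnot t₂ ht₂)]
  rw [lastLeftMajSum, lastLeftShuffles_succ_left, sum_image hinj,
    sum_congr rfl fun t ht => by rw [hpeel t ht, pow_add, mul_comm],
    ← sum_filter_add_sum_filter_not _ (a + b - 1 ∈ ·), sum_powersetCard_filter_notMem hab,
    lastLeftMajSum, lastLeftMajSum, mul_sum, mul_sum, add_comm b a]
  congr 1
  · refine sum_congr rfl fun t ht => ?_
    obtain ⟨⟨hsub, hcard⟩, hlast⟩ := mem_lastLeftShuffles.mp ht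
    rw [shuffleNat_last_of_mem u v (by rwa [Nat.sub_add_cancel hab]) hlast, hcard]
  · refine sum_congr rfl fun t ht => ?_
    obtain ⟨⟨hsub, hcard⟩, hlast⟩ := mem_lastLeftShuffles.mp ht
    rw [add_comm b a] at hsub hlast
    have hcompl : range (a + b) \ t ⊆ range (a + b - 1) := fun j hj => by
      obtain ⟨hj, hjt⟩ := mem_sdiff.mp hj
      have := mem_range.mp hj
      exact mem_range.mpr (lt_of_le_of_ne (by omega) fun h => hjt (h ▸ hlast))
    rw [shuffleNat_of_subset_range u v hcompl, card_sdiff_of_subset hsub, card_range, hcard,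
      majNat_congr fun i hi => shuffleNat_sdiff u v (range (a + b) \ t) hi,
      Finset.sdiff_sdiff_eq_self hsub,
      show a + b - 1 - (a + b - b) = b - 1 by omega]

end lastLeftMajSum

theorem lastLeftMajSum_eq {a b : ℕ} (ha : 0 < a) (hb : 0 < b) {u v : ℕ → ℕ}
    (huv : ∀ i < a, ∀ j < b, u i ≠ v j) :
    lastLeftMajSum a b u v = q ^ (majNat a u + majNat b v + if u (a - 1) < v (b - 1) then b else 0)
      * qbinom (a - 1) b := by
  match a, ha, huv with
  | 1, _, _ =>
    rw [lastLeftMajSum_succ_left u v (by omega), lastLeftMajSum_zero_left,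
      lastLeftMajSum_zero_right v u hb]
    simp [majNat, qbinom_zero_left, pow_add, mul_comm]
  | a + 2, _, huv =>
    have ih₁ := lastLeftMajSum_eq (a := a + 1) (b := b) a.succ_pos hb
      fun i hi j hj => huv i (by omega) j hj
    have ih₂ := lastLeftMajSum_eq (a := b) (b := a + 1) hb a.succ_pos
      fun i hi j hj => (huv j (by omega) i hi).symm
    obtain ⟨b, rfl⟩ := Nat.exists_eq_add_one_of_ne_zero hb.ne'
    rw [lastLeftMajSum_succ_left u v (by omega), ih₁, ih₂, majNat_succ (by omega : 0 < a + 1) u,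
      qbinom_comm (b + 1 - 1)]
    simp only [Nat.add_sub_cancel, Nat.add_succ_sub_one]
    linear_combination q ^ (majNat (a + 1) u + majNat (b + 1) v) *
      qbinom_succ_succ_weighted a b (y := u (a + 1)) (huv a (by omega) b (by omega))
termination_by a + b

lemma extend_val_of_lt {N : ℕ} (w : Fin N → ℕ) {i : ℕ} (hi : i < N) :
    Function.extend Fin.val w 0 i = w ⟨i, hi⟩ :=
  Fin.val_injective.extend_apply w 0 ⟨i, hi⟩

lemma extend_val_eq_dite {N : ℕ} (w : Fin N → ℕ) (i : ℕ) :
    Function.extend Fin.val w 0 i = if h : i < N then w ⟨i, h⟩ else 0 := by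
  split_ifs with h
  · exact extend_val_of_lt w h
  · exact Function.extend_apply' _ _ _ fun ⟨j, hj⟩ => h (hj ▸ j.2)

lemma majW_eq_majNat {N : ℕ} (w : Fin N → ℕ) :
    majW w = majNat N (Function.extend Fin.val w 0) := by
  set e := Function.extend Fin.val w 0
  have hterm : ∀ i : Fin N, (if h : i.1 + 1 < N then
      (if w ⟨i.1 + 1, h⟩ < w i then i.1 + 1 else 0) else 0)
        = if i.1 + 1 < N ∧ e (i.1 + 1) < e i then i.1 + 1 else 0 := by
    intro i
    by_cases h : i.1 + 1 < N
    · simp [h, e, extend_val_of_lt w h, extend_val_of_lt w i.2]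
    · simp [h]
  rw [majW, sum_congr rfl fun i _ => hterm i,
    Fin.sum_univ_eq_sum_range (fun k => if k + 1 < N ∧ e (k + 1) < e k then k + 1 else 0)]
  rcases N with _ | K
  · simp [majNat]
  · rw [sum_range_succ, majNat, Nat.add_sub_cancel]
    simp only [lt_irrefl, false_and, if_false, add_zero]
    exact sum_congr rfl fun i hi => by simp [mem_range.mp hi]

lemma shuffleWord_eq_shuffleNat {m n : ℕ} (σ : Fin m → ℕ) (π : Fin n → ℕ)
    (s : Finset (Fin (m + n))) (i : Fin (m + n)) :
    shuffleWord σ π s i = shuffleNat (Function.extend Fin.val σ 0)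
      (Function.extend Fin.val π 0) (s.map Fin.valEmbedding) i := by
  have hrank : #{j ∈ s.map Fin.valEmbedding | j < i.1} = #{j ∈ s | j < i} := by
    rw [filter_map, card_map]
    rfl
  have hcorank : #{j ∈ sᶜ | j < i} = i.1 - #{j ∈ s | j < i} := by
    have hin : {j ∈ s | j < i} = {j ∈ Iio i | j ∈ s} := by
      ext j; simp only [mem_filter, mem_Iio, and_comm]
    have hout : {j ∈ sᶜ | j < i} = {j ∈ Iio i | j ∉ s} := by
      ext j; simp only [mem_filter, mem_compl, mem_Iio, and_comm]
    have hsplit := card_filter_add_card_filter_not (s := Iio i) (· ∈ s)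
    rw [Fin.card_Iio] at hsplit
    rw [hin, hout]
    omega
  have hmem : i.1 ∈ s.map Fin.valEmbedding ↔ i ∈ s := mem_map' Fin.valEmbedding
  simp only [shuffleWord, shuffleNat, hmem, hrank, hcorank, extend_val_eq_dite]

lemma sum_shuffleWord_eq_lastLeftMajSum {m n : ℕ} (hmn : 0 < m + n) (σ : Fin m → ℕ)
    (π : Fin n → ℕ) :
    ∑ s ∈ univ.filter (fun s : Finset (Fin (m + n)) =>
        s.card = m ∧ (⟨m + n - 1, by omega⟩ : Fin (m + n)) ∈ s),
        q ^ majW (shuffleWord σ π s)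
      = lastLeftMajSum m n (Function.extend Fin.val σ 0) (Function.extend Fin.val π 0) := by
  have hlast : ∀ s : Finset (Fin (m + n)),
      m + n - 1 ∈ s.map Fin.valEmbedding ↔ (⟨m + n - 1, by omega⟩ : Fin (m + n)) ∈ s :=
    fun s => mem_map' Fin.valEmbedding (a := ⟨m + n - 1, by omega⟩)
  have himage : (univ.filter (fun s : Finset (Fin (m + n)) =>
        s.card = m ∧ (⟨m + n - 1, by omega⟩ : Fin (m + n)) ∈ s)).map
        (mapEmbedding Fin.valEmbedding).toEmbedding = lastLeftShuffles m n := by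
    rw [lastLeftShuffles, ← Nat.Iio_eq_range, ← Fin.map_valEmbedding_univ, powersetCard_map,
      filter_map]
    congr 1
    ext s
    simp [hlast]
  rw [lastLeftMajSum, ← himage, sum_map]
  refine sum_congr rfl fun s _ => congrArg _ ?_
  rw [majW_eq_majNat]
  exact majNat_congr fun i hi => by
    rw [extend_val_of_lt _ hi, shuffleWord_eq_shuffleNat]
    rfl

/-- Refined shuffle theorem: if `σ_m < π_n`, summing `q^{maj α}` over the shuffles `α`
of `σ` and `π` whose last letter is `σ_m` (i.e. the last position belongs to the set of
`σ`-positions) gives `q^{maj σ + maj π + n} ⋅ C(m+n-1, n)_q`. -/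
theorem stmt19 (m n : ℕ) (hm : 0 < m) (hn : 0 < n)
    (σ : Fin m → ℕ) (π : Fin n → ℕ)
    (hdisj : ∀ i j, σ i ≠ π j)
    (hlast : σ ⟨m - 1, by omega⟩ < π ⟨n - 1, by omega⟩) :
    ∑ s ∈ Finset.univ.filter (fun s : Finset (Fin (m + n)) =>
        s.card = m ∧ (⟨m + n - 1, by omega⟩ : Fin (m + n)) ∈ s),
        (RatFunc.X : RatFunc ℚ) ^ majW (shuffleWord σ π s)
      = RatFunc.X ^ (majW σ + majW π + n) *
          (qfac RatFunc.X (m + n - 1) / (qfac RatFunc.X n * qfac RatFunc.X (m - 1))) := by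
  have hdisj' : ∀ i < m, ∀ j < n,
      Function.extend Fin.val σ 0 i ≠ Function.extend Fin.val π 0 j :=
    fun i hi j hj => by
      rw [extend_val_of_lt σ hi, extend_val_of_lt π hj]
      exact hdisj _ _
  rw [sum_shuffleWord_eq_lastLeftMajSum (by omega), lastLeftMajSum_eq hm hn hdisj',
    extend_val_of_lt σ (by omega : m - 1 < m), extend_val_of_lt π (by omega : n - 1 < n),
    if_pos hlast, ← majW_eq_majNat, ← majW_eq_majNat, qbinom, ← Nat.sub_add_comm hm,
    mul_comm (qfac _ n)]
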